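/- Let n ≥ 1 and let T : ℝⁿ → ℝⁿ be monotone and additively homogeneous. Then the following are equivalent: (a) there is no pair (I, J) of disjoint subsets of {1,…,n} such that I is a MIN-dominion for T and J is a MAX-dominion for T; (b) for every g ∈ ℝⁿ there exist λ ∈ ℝ and u ∈ ℝⁿ such that g + T(u) = λ·e + u. -/

import Mathlib

/-- `T` is additively homogeneous: `T(x + c·e) = T(x) + c·e`. -/
def AddHomog (n : ℕ) (T : (Fin n → ℝ) → (Fin n → ℝ)) : Prop :=
  ∀ (x : Fin n → ℝ) (c : ℝ), T (fun i => x i + c) = fun i => T x i + c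

/-- `Δ` is a MIN-dominion for `T`: there is `β` with `T_i(t·e_{Δᶜ}) ≤ β`
for all `i ∈ Δ` and all `t ≥ 0`. -/
def MinDominion (n : ℕ) (T : (Fin n → ℝ) → (Fin n → ℝ)) (Δ : Set (Fin n)) : Prop :=
  Δ.Nonempty ∧ ∃ β : ℝ, ∀ i ∈ Δ, ∀ t : ℝ, 0 ≤ t →
    T (Δᶜ.indicator fun _ => t) i ≤ β

/-- `Δ` is a MAX-dominion for `T`: there is `α` with `T_i(−t·e_{Δᶜ}) ≥ α`
for all `i ∈ Δ` and all `t ≥ 0`. -/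
def MaxDominion (n : ℕ) (T : (Fin n → ℝ) → (Fin n → ℝ)) (Δ : Set (Fin n)) : Prop :=
  Δ.Nonempty ∧ ∃ α : ℝ, ∀ i ∈ Δ, ∀ t : ℝ, 0 ≤ t →
    α ≤ T (Δᶜ.indicator fun _ => -t) i

/-- Hilbert's seminorm `‖x‖_H = max_i x_i − min_i x_i`. -/
noncomputable def hilbertSeminorm (n : ℕ) (x : Fin n → ℝ) : ℝ :=
  (⨆ i, x i) - ⨅ i, x i

/-- The additive slice space `A_α^β(T) = {x : α·e + x ≤ T(x) ≤ β·e + x}`. -/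
def addSliceSpace (n : ℕ) (T : (Fin n → ℝ) → (Fin n → ℝ)) (α β : ℝ) : Set (Fin n → ℝ) :=
  {x | ∀ i, α + x i ≤ T x i ∧ T x i ≤ β + x i}

/-!
If `I` is a MIN-dominion and `J` a MAX-dominion, then for every `u` some `i ∈ I` (where `u` is
maximal on `I`) has `T(u)ᵢ ≤ β + uᵢ`, and some `j ∈ J` has `T(u)ⱼ ≥ α + uⱼ`; a vector `g` that is
very negative on `I` and very positive on `J` then rules out `g + T(u) = λ·e + u`.

Conversely, `F = g + T` has the same dominions as `T`, and its orbit `Fᵏ(0)` stays in a slice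
space of `F`. If the Hilbert seminorm of the orbit is bounded, Fekete's lemma gives the cycle time
`λ`; the orbit of `F - λ` is bounded, its limsup is a sub-fixed point, and the increasing orbit
from that point converges to a fixed point because `F` is sup-norm nonexpansive. If it is
unbounded, compactness of `[-∞, ∞]ⁿ` gives a subsequence along which every coordinate, measured
from the minimum (resp. the maximum), either stays bounded or tends to infinity. The bounded
coordinates form a MIN-dominion (resp. a MAX-dominion), and the two sets are disjoint because the
Hilbert seminorm tends to infinity.
-/

open Filter Function Set Topology

theorem Subadditive.exists_le_mul_le {s t : ℕ → ℝ} (ht : Subadditive t)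
    (hs : Subadditive fun k => -s k) (hst : ∀ k, s k ≤ t k) :
    ∃ lam : ℝ, ∀ k : ℕ, s k ≤ k * lam ∧ k * lam ≤ t k := by
  -- `(j + 1) s (k + 1) ≤ s ((j + 1)(k + 1)) ≤ t ((j + 1)(k + 1)) ≤ (k + 1) t (j + 1)`
  have key : ∀ j k : ℕ, (j + 1 : ℝ) * s (k + 1) ≤ (k + 1) * t (j + 1) := fun j k => by
    have h₁ := ht.apply_mul_add_le k (j + 1) (j + 1)
    have h₂ := hs.apply_mul_add_le j (k + 1) (k + 1)
    have h₃ := hst (k * (j + 1) + (j + 1))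
    rw [show j * (k + 1) + (k + 1) = k * (j + 1) + (j + 1) by ring] at h₂
    linarith
  have hbdd : BddBelow (range fun j : ℕ => t (j + 1) / (j + 1)) :=
    ⟨s 1, forall_mem_range.2 fun j => by
      rw [le_div_iff₀ (by positivity)]
      simpa [mul_comm] using key j 0⟩
  refine ⟨⨅ j : ℕ, t (j + 1) / (j + 1), ?_⟩
  rintro (_ | k)
  · have h₁ := ht 0 0
    have h₂ := hs 0 0
    simp only [add_zero] at h₁ h₂
    simp only [CharP.cast_eq_zero, zero_mul]
    constructor <;> linarith
  constructor
  · have : s (k + 1) / (k + 1) ≤ ⨅ j : ℕ, t (j + 1) / (j + 1) := le_ciInf fun j => by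
      rw [div_le_div_iff₀ (by positivity) (by positivity)]
      linarith [key j k]
    rw [div_le_iff₀ (by positivity)] at this
    push_cast
    linarith
  · have := ciInf_le hbdd k
    rw [le_div_iff₀ (by positivity)] at this
    push_cast
    linarith

section FixedPoint

variable {α : Type*} [ConditionallyCompleteLattice α] [TopologicalSpace α] {G : α → α}

theorem exists_le_map_of_iterate_le [InfConvergenceClass α] [OrderClosedTopology α]
    (hG : Monotone G) (hc : Continuous G) {x b : α} (hb : ∀ k, G^[k] x ≤ b)
    (hB : BddBelow (range fun k => G^[k] x)) : ∃ y ≤ b, y ≤ G y := by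
  set Y : ℕ → α := fun k => ⨆ j, G^[j + k] x
  have hA : ∀ k, BddAbove (range fun j => G^[j + k] x) := fun k =>
    ⟨b, forall_mem_range.2 fun j => hb _⟩
  have hYsucc : ∀ k, Y (k + 1) ≤ G (Y k) := fun k => ciSup_le fun j => by
    rw [← add_assoc, iterate_succ_apply']
    exact hG (le_ciSup (hA k) j)
  have hYanti : Antitone Y := antitone_nat_of_succ_le fun k => ciSup_le fun j => by
    rw [← add_assoc, add_right_comm]
    exact le_ciSup (hA k) (j + 1)
  have hYbdd : BddBelow (range Y) := by
    obtain ⟨a, ha⟩ := hB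
    exact ⟨a, forall_mem_range.2 fun k =>
      (ha ⟨k, rfl⟩).trans (by simpa using le_ciSup (hA k) 0)⟩
  have hlim := tendsto_atTop_ciInf hYanti hYbdd
  refine ⟨⨅ k, Y k, (ciInf_le hYbdd 0).trans (ciSup_le fun j => hb _), ?_⟩
  exact le_of_tendsto_of_tendsto' (hlim.comp (tendsto_add_atTop_nat 1))
    ((hc.tendsto _).comp hlim) hYsucc

theorem exists_isFixedPt_of_le_map [SupConvergenceClass α] [T2Space α]
    (hG : Monotone G) (hc : Continuous G) {x : α} (hx : x ≤ G x)
    (hA : BddAbove (range fun k => G^[k] x)) : ∃ u, IsFixedPt G u := by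
  have hmono : Monotone fun k => G^[k] x := monotone_nat_of_le_succ fun k => by
    rw [iterate_succ_apply]
    exact hG.iterate k hx
  have hlim := tendsto_atTop_ciSup hmono hA
  refine ⟨_, tendsto_nhds_unique ((hc.tendsto _).comp hlim) ?_⟩
  simpa only [comp_def, ← iterate_succ_apply' G] using hlim.comp (tendsto_add_atTop_nat 1)

end FixedPoint

theorem EReal.exists_eventually_lt_of_tendsto_coe {ι : Type*} {l : Filter ι} {z : ι → ℝ}
    {a : EReal} (h : Tendsto (fun k => (z k : EReal)) l (𝓝 a)) (ha : a ≠ ⊤) :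
    ∃ c : ℝ, ∀ᶠ k in l, z k < c := by
  obtain ⟨c, hc, -⟩ := EReal.lt_iff_exists_real_btwn.1 (lt_top_iff_ne_top.2 ha)
  exact ⟨c, (h.eventually (gt_mem_nhds hc)).mono fun _ => EReal.coe_lt_coe_iff.1⟩

variable {n : ℕ} {T : (Fin n → ℝ) → (Fin n → ℝ)}

namespace AddHomog

theorem apply_add_const (hhom : AddHomog n T) (x : Fin n → ℝ) (c : ℝ) (i : Fin n) :
    T (fun j => x j + c) i = T x i + c :=
  congrFun (hhom x c) i

protected theorem iterate (hhom : AddHomog n T) (k : ℕ) : AddHomog n T^[k] := by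
  induction k with
  | zero => exact fun _ _ => rfl
  | succ k ih => intro x c; rw [iterate_succ_apply, iterate_succ_apply, hhom, ih]

theorem apply_le_of_le_add (hmono : Monotone T) (hhom : AddHomog n T) {x y : Fin n → ℝ} {c : ℝ}
    (h : x ≤ fun j => y j + c) (i : Fin n) : T x i ≤ T y i + c :=
  (hmono h i).trans_eq (hhom.apply_add_const y c i)

theorem add_le_apply_of_add_le (hmono : Monotone T) (hhom : AddHomog n T) {x y : Fin n → ℝ}
    {c : ℝ} (h : (fun j => y j + c) ≤ x) (i : Fin n) : T y i + c ≤ T x i :=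
  (hhom.apply_add_const y c i).symm.trans_le (hmono h i)

theorem lipschitzWith_one (hmono : Monotone T) (hhom : AddHomog n T) : LipschitzWith 1 T := by
  refine LipschitzWith.of_dist_le_mul fun x y => ?_
  rw [NNReal.coe_one, one_mul, dist_pi_le_iff dist_nonneg]
  have hxy : ∀ x y : Fin n → ℝ, x ≤ fun j => y j + dist x y := fun x y j => by
    have := (le_abs_self _).trans ((Real.dist_eq (x j) (y j)).symm.trans_le (dist_le_pi_dist x y j))
    linarith
  intro i
  have h₁ := hhom.apply_le_of_le_add hmono (hxy x y) i
  have h₂ := hhom.apply_le_of_le_add hmono (hxy y x) i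
  rw [dist_comm y x] at h₂
  rw [Real.dist_eq, abs_sub_le_iff]
  constructor <;> linarith

theorem const_add (hhom : AddHomog n T) (g : Fin n → ℝ) :
    AddHomog n fun x i => g i + T x i := fun x c => by
  funext i
  simp only [hhom.apply_add_const]
  ring

theorem iterate_const_add (hhom : AddHomog n T) (c : ℝ) (k : ℕ) (x : Fin n → ℝ) :
    (fun x i => c + T x i)^[k] x = fun i => T^[k] x i + k * c := by
  induction k with
  | zero => simp
  | succ k ih =>
    funext i
    rw [iterate_succ_apply', ih, iterate_succ_apply', hhom.apply_add_const]
    push_cast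
    ring

end AddHomog

theorem exists_isFixedPt_of_bounded_orbit (hmono : Monotone T) (hhom : AddHomog n T) {b : ℝ}
    (hb : ∀ k i, |T^[k] 0 i| ≤ b) : ∃ u, IsFixedPt T u := by
  have hc := (hhom.lipschitzWith_one hmono).continuous
  obtain ⟨y, hyb, hy⟩ := exists_le_map_of_iterate_le hmono hc (b := fun _ => b)
    (fun k i => (abs_le.1 (hb k i)).2)
    ⟨fun _ => -b, forall_mem_range.2 fun k i => (abs_le.1 (hb k i)).1⟩
  refine exists_isFixedPt_of_le_map hmono hc hy ⟨fun _ => b + b, forall_mem_range.2 fun k i => ?_⟩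
  have := (hhom.iterate k).apply_le_of_le_add (hmono.iterate k) (y := 0) (by simpa using hyb) i
  linarith [(abs_le.1 (hb k i)).2]

theorem exists_cycleTime [Nonempty (Fin n)] (hmono : Monotone T) (hhom : AddHomog n T) {M : ℝ}
    (hM : ∀ k, hilbertSeminorm n (T^[k] 0) ≤ M) : ∃ lam : ℝ, ∀ k i, |T^[k] 0 i - k * lam| ≤ M := by
  set t : ℕ → ℝ := fun k => ⨆ i, T^[k] 0 i
  set s : ℕ → ℝ := fun k => ⨅ i, T^[k] 0 i
  have hle_t : ∀ k i, T^[k] 0 i ≤ t k := fun k i => le_ciSup (Finite.bddAbove_range _) i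
  have hs_le : ∀ k i, s k ≤ T^[k] 0 i := fun k i => ciInf_le (Finite.bddBelow_range _) i
  have ht : Subadditive t := fun m k => ciSup_le fun i => by
    rw [iterate_add_apply]
    linarith [(hhom.iterate m).apply_le_of_le_add (hmono.iterate m) (y := 0) (c := t k)
      (fun j => by simpa using hle_t k j) i, hle_t m i]
  have hs : Subadditive fun k => -s k := fun m k => by
    have : s m + s k ≤ s (m + k) := le_ciInf fun i => by
      rw [iterate_add_apply]
      linarith [(hhom.iterate m).add_le_apply_of_add_le (hmono.iterate m) (y := 0) (c := s k)
        (fun j => by simpa using hs_le k j) i, hs_le m i]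
    linarith
  obtain ⟨lam, hlam⟩ := ht.exists_le_mul_le hs fun k =>
    (hs_le k (Classical.arbitrary _)).trans (hle_t k _)
  have hts : ∀ k, t k - s k ≤ M := hM
  refine ⟨lam, fun k i => abs_le.2 ⟨?_, ?_⟩⟩
  · linarith [hs_le k i, (hlam k).2, hts k]
  · linarith [hle_t k i, (hlam k).1, hts k]

theorem exists_eigenvector_of_bddAbove_hilbertSeminorm [Nonempty (Fin n)] (hmono : Monotone T)
    (hhom : AddHomog n T) (hb : BddAbove (range fun k => hilbertSeminorm n (T^[k] 0))) :
    ∃ (lam : ℝ) (u : Fin n → ℝ), T u = fun i => lam + u i := by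
  obtain ⟨M, hM⟩ := hb
  obtain ⟨lam, hlam⟩ := exists_cycleTime hmono hhom fun k => hM ⟨k, rfl⟩
  obtain ⟨u, hu⟩ := exists_isFixedPt_of_bounded_orbit (T := fun x i => -lam + T x i)
    (fun x y h i => add_le_add_right (hmono h i) _) (hhom.const_add _)
    fun k i => by simpa [hhom.iterate_const_add (-lam), sub_eq_add_neg] using hlam k i
  exact ⟨lam, u, funext fun i => by linarith [congrFun hu i]⟩

def negConj (T : (Fin n → ℝ) → (Fin n → ℝ)) : (Fin n → ℝ) → (Fin n → ℝ) := fun x => -T (-x)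

theorem Monotone.negConj (hmono : Monotone T) : Monotone (negConj T) :=
  fun _ _ h => neg_le_neg (hmono (neg_le_neg h))

theorem AddHomog.negConj (hhom : AddHomog n T) : AddHomog n (negConj T) := fun x c => by
  have : -(fun j => x j + c) = fun j => (-x) j + -c := funext fun _ => neg_add _ _
  funext i
  change -T (-(fun j => x j + c)) i = -T (-x) i + c
  rw [this, hhom.apply_add_const]
  ring

theorem neg_mem_addSliceSpace_negConj {α β : ℝ} {x : Fin n → ℝ}
    (hx : x ∈ addSliceSpace n T α β) : -x ∈ addSliceSpace n (negConj T) (-β) (-α) := fun i => by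
  simp only [negConj, neg_neg, Pi.neg_apply]
  constructor <;> linarith [hx i]

theorem minDominion_negConj_iff {Δ : Set (Fin n)} :
    MinDominion n (negConj T) Δ ↔ MaxDominion n T Δ := by
  have hneg : ∀ t : ℝ, -(Δᶜ.indicator fun _ => t) = Δᶜ.indicator fun _ => -t := fun t =>
    (indicator_neg Δᶜ fun _ => t).symm
  refine and_congr_right fun _ => ⟨fun ⟨β, h⟩ => ⟨-β, fun i hi t ht => ?_⟩,
    fun ⟨α, h⟩ => ⟨-α, fun i hi t ht => ?_⟩⟩
  · have := h i hi t ht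
    simp only [negConj, hneg, Pi.neg_apply] at this
    linarith
  · have := h i hi t ht
    simp only [negConj, hneg, Pi.neg_apply]
    linarith

theorem MinDominion.exists_apply_le (hmono : Monotone T) (hhom : AddHomog n T)
    {Δ : Set (Fin n)} (hΔ : MinDominion n T Δ) : ∃ β, ∀ u, ∃ i ∈ Δ, T u i ≤ β + u i := by
  obtain ⟨hne, β, hβ⟩ := hΔ
  refine ⟨β, fun u => ?_⟩
  obtain ⟨i, hi, hmax⟩ := Δ.exists_max_image u Δ.toFinite hne
  have hsup := fun j => le_ciSup (Finite.bddAbove_range u) j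
  have hle : u ≤ fun j => Δᶜ.indicator (fun _ => (⨆ j, u j) - u i) j + u i := fun j => by
    by_cases hj : j ∈ Δ
    · simp [hj, hmax j hj]
    · simp [hj, hsup j]
  have := hβ i hi _ (sub_nonneg.2 (hsup i))
  exact ⟨i, hi, by linarith [hhom.apply_le_of_le_add hmono hle i]⟩

theorem MaxDominion.exists_le_apply (hmono : Monotone T) (hhom : AddHomog n T)
    {Δ : Set (Fin n)} (hΔ : MaxDominion n T Δ) : ∃ α, ∀ u, ∃ i ∈ Δ, α + u i ≤ T u i := by
  obtain ⟨β, h⟩ := (minDominion_negConj_iff.2 hΔ).exists_apply_le hmono.negConj hhom.negConj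
  refine ⟨-β, fun u => ?_⟩
  obtain ⟨i, hi, hle⟩ := h (-u)
  simp only [negConj, neg_neg, Pi.neg_apply] at hle
  exact ⟨i, hi, by linarith⟩

theorem minDominion_of_tendsto (hmono : Monotone T) (hhom : AddHomog n T) {α β : ℝ}
    {x : ℕ → Fin n → ℝ} (hx : ∀ k, x k ∈ addSliceSpace n T α β) {m : ℕ → ℝ}
    (hm : ∀ k i, m k ≤ x k i) (hm' : ∀ k, ∃ i, x k i ≤ m k) {a : Fin n → EReal}
    (ha : Tendsto (fun k i => ((x k i - m k : ℝ) : EReal)) atTop (𝓝 a)) :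
    MinDominion n T {i | a i ≠ ⊤} := by
  set I := {i | a i ≠ ⊤}
  have ha' := tendsto_pi_nhds.1 ha
  choose! c hc using fun i (hi : i ∈ I) => EReal.exists_eventually_lt_of_tendsto_coe (ha' i) hi
  have key : ∀ t : ℝ, ∀ᶠ k in atTop,
      ∀ i, (i ∈ I → x k i - m k < c i) ∧ (i ∉ I → t < x k i - m k) := fun t =>
    eventually_all.2 fun i => by
      by_cases hi : i ∈ I
      · exact (hc i hi).mono fun k hk => ⟨fun _ => hk, absurd hi⟩
      · have htop : a i = ⊤ := not_not.1 hi
        have := EReal.tendsto_coe_nhds_top_iff.1 (htop ▸ ha' i)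
        exact (this.eventually_gt_atTop t).mono fun k hk => ⟨fun h => absurd h hi, fun _ => hk⟩
  refine ⟨?_, β + ⨆ i, c i, fun i hi t ht => ?_⟩
  · by_contra hI
    obtain ⟨k, hk⟩ := (key 0).exists
    obtain ⟨i, hi⟩ := hm' k
    linarith [(hk i).2 fun h => hI ⟨i, h⟩]
  · obtain ⟨k, hk⟩ := (key t).exists
    have hle : Iᶜ.indicator (fun _ => t) ≤ fun j => x k j + -m k := fun j => by
      by_cases hj : j ∈ I
      · simp [hj, hm k j]
      · simp [hj]
        linarith [(hk j).2 hj]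
    linarith [hhom.apply_le_of_le_add hmono hle i, (hx k i).2, (hk i).1 hi,
      le_ciSup (Finite.bddAbove_range c) i]

theorem maxDominion_of_tendsto (hmono : Monotone T) (hhom : AddHomog n T) {α β : ℝ}
    {x : ℕ → Fin n → ℝ} (hx : ∀ k, x k ∈ addSliceSpace n T α β) {M : ℕ → ℝ}
    (hM : ∀ k i, x k i ≤ M k) (hM' : ∀ k, ∃ i, M k ≤ x k i) {b : Fin n → EReal}
    (hb : Tendsto (fun k i => ((M k - x k i : ℝ) : EReal)) atTop (𝓝 b)) :
    MaxDominion n T {i | b i ≠ ⊤} :=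
  minDominion_negConj_iff.1 <| minDominion_of_tendsto hmono.negConj hhom.negConj
    (x := fun k => -x k) (m := fun k => -M k) (fun k => neg_mem_addSliceSpace_negConj (hx k))
    (fun k i => neg_le_neg (hM k i)) (fun k => (hM' k).imp fun _ => neg_le_neg)
    (by simpa only [Pi.neg_apply, neg_sub_neg] using hb)

theorem exists_dominions_of_not_bddAbove_hilbertSeminorm [Nonempty (Fin n)] (hmono : Monotone T)
    (hhom : AddHomog n T) {α β : ℝ} {x : ℕ → Fin n → ℝ} (hx : ∀ k, x k ∈ addSliceSpace n T α β)
    (hunb : ¬BddAbove (range fun k => hilbertSeminorm n (x k))) :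
    ∃ I J : Set (Fin n), Disjoint I J ∧ MinDominion n T I ∧ MaxDominion n T J := by
  have : ∀ k : ℕ, ∃ m, (k : ℝ) < hilbertSeminorm n (x m) := fun k => by
    obtain ⟨_, ⟨m, rfl⟩, h⟩ := not_bddAbove_iff.1 hunb k
    exact ⟨m, h⟩
  choose ψ hψ using this
  set lo : ℕ → ℝ := fun k => ⨅ i, x (ψ k) i
  set hi : ℕ → ℝ := fun k => ⨆ i, x (ψ k) i
  obtain ⟨⟨a, b⟩, φ, hφ, hlim⟩ := CompactSpace.tendsto_subseq fun k =>
    ((fun i => ((x (ψ k) i - lo k : ℝ) : EReal)), fun i => ((hi k - x (ψ k) i : ℝ) : EReal))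
  obtain ⟨ha, hb⟩ := (Prod.tendsto_iff _ _).1 hlim
  refine ⟨_, _, disjoint_left.2 fun i hIi hJi => ?_,
    minDominion_of_tendsto hmono hhom (fun k => hx (ψ (φ k))) (m := lo ∘ φ)
      (fun k i => ciInf_le (Finite.bddBelow_range _) i)
      (fun k => (exists_eq_ciInf_of_finite (f := x (ψ (φ k)))).imp fun _ => le_of_eq) ha,
    maxDominion_of_tendsto hmono hhom (fun k => hx (ψ (φ k))) (M := hi ∘ φ)
      (fun k i => le_ciSup (Finite.bddAbove_range _) i)
      (fun k => (exists_eq_ciSup_of_finite (f := x (ψ (φ k)))).imp fun _ => ge_of_eq) hb⟩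
  obtain ⟨c₁, hc₁⟩ := EReal.exists_eventually_lt_of_tendsto_coe (tendsto_pi_nhds.1 ha i) hIi
  obtain ⟨c₂, hc₂⟩ := EReal.exists_eventually_lt_of_tendsto_coe (tendsto_pi_nhds.1 hb i) hJi
  obtain ⟨k, hk₁, hk₂, hk⟩ := (hc₁.and (hc₂.and
    (tendsto_natCast_atTop_atTop.eventually_gt_atTop (c₁ + c₂)))).exists
  have : (k : ℝ) ≤ φ k := by exact_mod_cast hφ.id_le k
  have : (φ k : ℝ) < hi (φ k) - lo (φ k) := hψ (φ k)
  linarith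

theorem mapsTo_addSliceSpace (hmono : Monotone T) (hhom : AddHomog n T) (α β : ℝ) :
    MapsTo T (addSliceSpace n T α β) (addSliceSpace n T α β) := fun x hx i => by
  have hα : (fun j => x j + α) ≤ T x := fun j => by linarith [(hx j).1]
  have hβ : T x ≤ fun j => x j + β := fun j => by linarith [(hx j).2]
  constructor
  · linarith [hhom.add_le_apply_of_add_le hmono hα i]
  · linarith [hhom.apply_le_of_le_add hmono hβ i]

theorem zero_mem_addSliceSpace :
    (0 : Fin n → ℝ) ∈ addSliceSpace n T (⨅ i, T 0 i) (⨆ i, T 0 i) := fun i => by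
  simpa using ⟨ciInf_le (Finite.bddBelow_range _) i, le_ciSup (Finite.bddAbove_range _) i⟩

theorem exists_eigenvector_or_dominions (hmono : Monotone T) (hhom : AddHomog n T) :
    (∃ (lam : ℝ) (u : Fin n → ℝ), T u = fun i => lam + u i) ∨
      ∃ I J : Set (Fin n), Disjoint I J ∧ MinDominion n T I ∧ MaxDominion n T J := by
  rcases isEmpty_or_nonempty (Fin n) with hn | hn
  · exact Or.inl ⟨0, 0, funext isEmptyElim⟩
  by_cases hb : BddAbove (range fun k => hilbertSeminorm n (T^[k] 0))
  · exact Or.inl (exists_eigenvector_of_bddAbove_hilbertSeminorm hmono hhom hb)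
  · exact Or.inr (exists_dominions_of_not_bddAbove_hilbertSeminorm hmono hhom
      (fun k => (mapsTo_addSliceSpace hmono hhom _ _).iterate k zero_mem_addSliceSpace) hb)

theorem MinDominion.of_const_add {g : Fin n → ℝ} {Δ : Set (Fin n)}
    (h : MinDominion n (fun x i => g i + T x i) Δ) : MinDominion n T Δ := by
  obtain ⟨hne, β, hβ⟩ := h
  exact ⟨hne, β - ⨅ j, g j, fun i hi t ht => by
    linarith [hβ i hi t ht, ciInf_le (Finite.bddBelow_range g) i]⟩

theorem MaxDominion.of_const_add {g : Fin n → ℝ} {Δ : Set (Fin n)}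
    (h : MaxDominion n (fun x i => g i + T x i) Δ) : MaxDominion n T Δ := by
  obtain ⟨hne, α, hα⟩ := h
  exact ⟨hne, α - ⨆ j, g j, fun i hi t ht => by
    linarith [hα i hi t ht, le_ciSup (Finite.bddAbove_range g) i]⟩

theorem not_exists_dominions_of_forall_exists_eigenvector (hmono : Monotone T)
    (hhom : AddHomog n T) (h : ∀ g : Fin n → ℝ, ∃ (lam : ℝ) (u : Fin n → ℝ),
      (fun i => g i + T u i) = fun i => lam + u i) :
    ¬∃ I J : Set (Fin n), Disjoint I J ∧ MinDominion n T I ∧ MaxDominion n T J := by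
  rintro ⟨I, J, hIJ, hI, hJ⟩
  obtain ⟨β, hβ⟩ := hI.exists_apply_le hmono hhom
  obtain ⟨α, hα⟩ := hJ.exists_le_apply hmono hhom
  set c := (β - α) / 2 + 1 with hc
  -- a large reward on `J` and penalty on `I` force `c + α ≤ lam ≤ β - c`
  obtain ⟨lam, u, hu⟩ := h (J.indicator (fun _ => c) - I.indicator fun _ => c)
  obtain ⟨i, hi, hTi⟩ := hβ u
  obtain ⟨j, hj, hTj⟩ := hα u
  have hui := congrFun hu i
  have huj := congrFun hu j
  simp [hi, hj, disjoint_left.1 hIJ hi, disjoint_right.1 hIJ hj] at hui huj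
  linarith

theorem stmt3_general (n : ℕ)
    (T : (Fin n → ℝ) → (Fin n → ℝ))
    (hmono : Monotone T) (hhom : AddHomog n T) :
    (¬ ∃ I J : Set (Fin n),
        Disjoint I J ∧ MinDominion n T I ∧ MaxDominion n T J) ↔
    (∀ g : Fin n → ℝ, ∃ (lam : ℝ) (u : Fin n → ℝ),
        (fun i => g i + T u i) = fun i => lam + u i) := by
  refine ⟨fun h g => ?_, not_exists_dominions_of_forall_exists_eigenvector hmono hhom⟩
  refine (exists_eigenvector_or_dominions (T := fun x i => g i + T x i)
    (fun x y hxy i => add_le_add_right (hmono hxy i) _) (hhom.const_add g)).resolve_right ?_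
  rintro ⟨I, J, hIJ, hI, hJ⟩
  exact h ⟨I, J, hIJ, hI.of_const_add, hJ.of_const_add⟩

theorem stmt3 (n : ℕ) (hn : 1 ≤ n)
    (T : (Fin n → ℝ) → (Fin n → ℝ))
    (hmono : Monotone T) (hhom : AddHomog n T) :
    (¬ ∃ I J : Set (Fin n),
        Disjoint I J ∧ MinDominion n T I ∧ MaxDominion n T J) ↔
    (∀ g : Fin n → ℝ, ∃ (lam : ℝ) (u : Fin n → ℝ),
        (fun i => g i + T u i) = fun i => lam + u i) :=
  stmt3_general n T hmono hhom
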